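/- Under the same hypotheses, the 9×9 matrix R̂ of the generic ACC solution (identity outside the central 3×3 block r̂) satisfies the quadratic (Hecke) relation (R̂ − 1)(R̂ − λ₂·1) = 0, where λ₂ = −(x₁x₃/b)². -/

import Mathlib

open Matrix Polynomial

noncomputable section

/-- `R̂ ⊗ 1` acting on `V ⊗ V ⊗ V` with `V = ℂ^3`. -/
def R1 (R : Matrix (Fin 3 × Fin 3) (Fin 3 × Fin 3) ℂ) :
    Matrix (Fin 3 × Fin 3 × Fin 3) (Fin 3 × Fin 3 × Fin 3) ℂ :=
  fun p q => R (p.1, p.2.1) (q.1, q.2.1) * (if p.2.2 = q.2.2 then 1 else 0)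

/-- `1 ⊗ R̂` acting on `V ⊗ V ⊗ V` with `V = ℂ^3`. -/
def R2 (R : Matrix (Fin 3 × Fin 3) (Fin 3 × Fin 3) ℂ) :
    Matrix (Fin 3 × Fin 3 × Fin 3) (Fin 3 × Fin 3 × Fin 3) ℂ :=
  fun p q => (if p.1 = q.1 then 1 else 0) * R (p.2.1, p.2.2) (q.2.1, q.2.2)

/-- The braid relation `R̂₁R̂₂R̂₁ = R̂₂R̂₁R̂₂`. -/
def Braid (R : Matrix (Fin 3 × Fin 3) (Fin 3 × Fin 3) ℂ) : Prop :=
  R1 R * R2 R * R1 R = R2 R * R1 R * R2 R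

/-- The 3×3 central block of the generic ACC solution. -/
def rhat (a x1 x3 b : ℂ) : Matrix (Fin 3) (Fin 3) ℂ :=
  !![a, x1, b;
     x3 * (a - 1) / b, (x1 * x3 + b) / b, x3;
     x1 ^ 2 * x3 ^ 2 / b ^ 3, -(x1 * (a * b + x1 * x3)) / (a * b ^ 2), -(x1 * x3) / (a * b)]

/-- position within the charge-2 sector: |20⟩, |11⟩, |02⟩. -/
def f2 (p : Fin 3 × Fin 3) : Fin 3 := if p = (2, 0) then 0 else if p = (1, 1) then 1 else 2

/-- The generic ACC solution: identity outside the central 3×3 block. -/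
def Rhat (a x1 x3 b : ℂ) : Matrix (Fin 3 × Fin 3) (Fin 3 × Fin 3) ℂ :=
  fun p q =>
    if (p.1 : ℕ) + (p.2 : ℕ) = 2 ∧ (q.1 : ℕ) + (q.2 : ℕ) = 2 then
      rhat a x1 x3 b (f2 p) (f2 q)
    else if p = q then 1 else 0

/-! `r̂ - 1` has rank one: its second row is `x₃/b` times the first, and the constraint on
`a, x₁, x₃, b` is exactly what makes the third row a multiple of the first as well. A matrix
`M = 1 + u vᵀ` satisfies `(M - 1)² = (v ⬝ u) (M - 1)`, hence `(M - 1)(M - (1 + v ⬝ u)) = 0`,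
and the same constraint gives `1 + v ⬝ u = -(x₁x₃/b)²`. Outside the charge-2 sector `R̂` is the
identity, so `R̂ - 1` is the same rank-one matrix with `u, v` extended by zero.
-/

theorem Matrix.sub_one_mul_sub_smul_one_eq_zero_of_sub_one_eq_vecMulVec {R n : Type*}
    [CommRing R] [Fintype n] [DecidableEq n] {M : Matrix n n R} {u v : n → R}
    (h : M - 1 = vecMulVec u v) : (M - 1) * (M - (1 + v ⬝ᵥ u) • 1) = 0 := by
  have hshift : M - (1 + v ⬝ᵥ u) • 1 = vecMulVec u v - (v ⬝ᵥ u) • 1 := by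
    rw [← h, add_smul, one_smul]; abel
  rw [hshift, h, mul_sub, vecMulVec_mul_vecMulVec, vecMulVec_smul, Matrix.mul_smul, mul_one,
    sub_self]

abbrev IsChargeTwo (p : Fin 3 × Fin 3) : Prop := (p.1 : ℕ) + (p.2 : ℕ) = 2

def extendChargeTwo (w : Fin 3 → ℂ) (p : Fin 3 × Fin 3) : ℂ :=
  if IsChargeTwo p then w (f2 p) else 0

lemma f2_eq_f2_iff {p q : Fin 3 × Fin 3} (hp : IsChargeTwo p) (hq : IsChargeTwo q) :
    f2 p = f2 q ↔ p = q := by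
  revert p q; unfold IsChargeTwo; decide

lemma dotProduct_extendChargeTwo (v u : Fin 3 → ℂ) :
    extendChargeTwo v ⬝ᵥ extendChargeTwo u = v ⬝ᵥ u := by
  simp only [dotProduct, Fintype.sum_prod_type, Fin.sum_univ_three, extendChargeTwo, f2]
  simp (config := {decide := true}) only [if_true, if_false, mul_zero, add_zero, zero_add]
  ring

lemma Rhat_sub_one_eq_vecMulVec_extendChargeTwo {a x1 x3 b : ℂ} {u v : Fin 3 → ℂ}
    (h : rhat a x1 x3 b - 1 = vecMulVec u v) :
    Rhat a x1 x3 b - 1 = vecMulVec (extendChargeTwo u) (extendChargeTwo v) := by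
  ext p q
  rw [Matrix.sub_apply, vecMulVec_apply, one_apply]
  by_cases hp : IsChargeTwo p <;> by_cases hq : IsChargeTwo q
  · have hpq := congrFun₂ h (f2 p) (f2 q)
    simp only [Matrix.sub_apply, vecMulVec_apply, one_apply, f2_eq_f2_iff hp hq] at hpq
    rwa [Rhat, extendChargeTwo, extendChargeTwo, if_pos hp, if_pos hq, if_pos ⟨hp, hq⟩]
  · have hne : p ≠ q := by rintro rfl; exact hq hp
    simp [Rhat, extendChargeTwo, hp, hq, hne]
  · have hne : p ≠ q := by rintro rfl; exact hp hq
    simp [Rhat, extendChargeTwo, hp, hq, hne]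
  · simp [Rhat, extendChargeTwo, hp, hq]

lemma rhat_sub_one_eq_vecMulVec {a x1 x3 b : ℂ} (ha : a ≠ 0) (hb : b ≠ 0)
    (hcon : b ^ 2 * a * (a - 1) + b * x1 * x3 * (a - 1) + a * x1 ^ 2 * x3 ^ 2 = 0) :
    rhat a x1 x3 b - 1 =
      vecMulVec ![1, x3 / b, -(a * b + x1 * x3) / (a * b ^ 2)] ![a - 1, x1, b] := by
  ext i j
  fin_cases i <;> fin_cases j <;>
    simp only [rhat, Matrix.sub_apply, of_apply, one_apply, vecMulVec_apply, cons_val',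
      cons_val_zero, cons_val_one, cons_val, cons_val_fin_one, Fin.reduceFinMk, Fin.reduceEq,
      ↓reduceIte, Fin.isValue, Fin.zero_eta, Fin.mk_one] <;>
    field_simp <;> first | ring1 | linear_combination hcon

theorem generic_hecke_general (a x1 x3 b : ℂ) (ha : a ≠ 0) (hb : b ≠ 0)
    (hcon : b ^ 2 * a * (a - 1) + b * x1 * x3 * (a - 1) + a * x1 ^ 2 * x3 ^ 2 = 0) :
    (Rhat a x1 x3 b - 1) * (Rhat a x1 x3 b - (-(x1 * x3 / b) ^ 2) • 1) = 0 := by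
  have hrank := Rhat_sub_one_eq_vecMulVec_extendChargeTwo (rhat_sub_one_eq_vecMulVec ha hb hcon)
  have heigen : 1 + extendChargeTwo ![a - 1, x1, b] ⬝ᵥ
      extendChargeTwo ![1, x3 / b, -(a * b + x1 * x3) / (a * b ^ 2)] = -(x1 * x3 / b) ^ 2 := by
    rw [dotProduct_extendChargeTwo]
    simp only [cons_dotProduct_cons, dotProduct_of_isEmpty, add_zero]
    field_simp
    linear_combination hcon
  rw [← heigen]
  exact sub_one_mul_sub_smul_one_eq_zero_of_sub_one_eq_vecMulVec hrank

/-- the generic ACC solution satisfies the Hecke relation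
`(R̂ − 1)(R̂ − λ₂·1) = 0` with `λ₂ = −(x₁x₃/b)²`. -/
theorem generic_hecke (a x1 x3 b : ℂ) (ha : a ≠ 0) (hx1 : x1 ≠ 0) (hx3 : x3 ≠ 0)
    (hb : b ≠ 0)
    (hcon : b ^ 2 * a * (a - 1) + b * x1 * x3 * (a - 1) + a * x1 ^ 2 * x3 ^ 2 = 0) :
    (Rhat a x1 x3 b - 1) * (Rhat a x1 x3 b - (-(x1 * x3 / b) ^ 2) • 1) = 0 :=
  generic_hecke_general a x1 x3 b ha hb hcon
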